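/- Let n ≥ 2 and m ≥ 1, so that C_{2n} is an even cycle and C_{2m+1} is an odd cycle. Then the Cartesian product C_{2n} □ C_{2m+1} and the Kronecker product C_{2n} ⊗ C_{2m+1} are not isomorphic, because the smallest adjacency eigenvalue of C_{2n} □ C_{2m+1} is −2 + 2cos(2mπ/(2m+1)), which belongs to neither of the two candidate smallest adjacency eigenvalues {−4, 4cos(2mπ/(2m+1))} of C_{2n} ⊗ C_{2m+1}. -/

import Mathlib

open SimpleGraph

/-- The cycle graph `C_n` on `ℤ/nℤ`: `i` adjacent to `j` iff `i - j ≡ ±1 (mod n)`. -/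
def cycleG (n : ℕ) : SimpleGraph (ZMod n) where
  Adj i j := i ≠ j ∧ (i - j = 1 ∨ j - i = 1)
  symm := ⟨fun _ _ h => ⟨h.1.symm, h.2.symm⟩⟩
  loopless := ⟨fun _ h => h.1 rfl⟩

/-- Cartesian product of graphs. -/
def cartProd {α β : Type*} (G : SimpleGraph α) (H : SimpleGraph β) : SimpleGraph (α × β) where
  Adj p q := (G.Adj p.1 q.1 ∧ p.2 = q.2) ∨ (p.1 = q.1 ∧ H.Adj p.2 q.2)
  symm := ⟨fun _ _ h => h.imp (fun h => ⟨h.1.symm, h.2.symm⟩) (fun h => ⟨h.1.symm, h.2.symm⟩)⟩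
  loopless := ⟨fun _ h => h.elim (fun h => G.loopless.irrefl _ h.1) (fun h => H.loopless.irrefl _ h.2)⟩

/-- Kronecker (tensor/direct) product of graphs. -/
def tensorProd {α β : Type*} (G : SimpleGraph α) (H : SimpleGraph β) : SimpleGraph (α × β) where
  Adj p q := G.Adj p.1 q.1 ∧ H.Adj p.2 q.2
  symm := ⟨fun _ _ h => ⟨h.1.symm, h.2.symm⟩⟩
  loopless := ⟨fun _ h => G.loopless.irrefl _ h.1⟩

/-- Strong product of graphs. -/
def strongProd {α β : Type*} (G : SimpleGraph α) (H : SimpleGraph β) : SimpleGraph (α × β) where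
  Adj p q := (G.Adj p.1 q.1 ∧ p.2 = q.2) ∨ (p.1 = q.1 ∧ H.Adj p.2 q.2) ∨
    (G.Adj p.1 q.1 ∧ H.Adj p.2 q.2)
  symm := ⟨fun _ _ h => h.imp (fun h => ⟨h.1.symm, h.2.symm⟩)
    (fun h => h.imp (fun h => ⟨h.1.symm, h.2.symm⟩) (fun h => ⟨h.1.symm, h.2.symm⟩))⟩
  loopless := ⟨fun _ h => h.elim (fun h => G.loopless.irrefl _ h.1)
    (fun h => h.elim (fun h => H.loopless.irrefl _ h.2) (fun h => G.loopless.irrefl _ h.1))⟩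

/-- Lexicographic product of graphs. -/
def lexProd {α β : Type*} (G : SimpleGraph α) (H : SimpleGraph β) : SimpleGraph (α × β) where
  Adj p q := G.Adj p.1 q.1 ∨ (p.1 = q.1 ∧ H.Adj p.2 q.2)
  symm := ⟨fun _ _ h => h.imp (fun h => h.symm) (fun h => ⟨h.1.symm, h.2.symm⟩)⟩
  loopless := ⟨fun _ h => h.elim (fun h => G.loopless.irrefl _ h) (fun h => H.loopless.irrefl _ h.2)⟩

open Classical in
/-- Adjacency matrix of a graph, over `ℝ`. -/
noncomputable def adjMat {α : Type*} [Fintype α] (G : SimpleGraph α) : Matrix α α ℝ :=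
  Matrix.of fun i j => if G.Adj i j then 1 else 0

/-!
The discrete Fourier matrix `F j k = exp (2πi jk / N)` diagonalises `C_N`: its columns, the
characters of `ℤ/Nℤ`, are eigenvectors with eigenvalues `2 cos (2πk/N)`. Hence `F ⊗ F`
diagonalises the adjacency matrix `A ⊗ 1 + 1 ⊗ B` of `C_N □ C_M`, whose spectrum is therefore
the set of sums `2 cos (2πk/N) + 2 cos (2πl/M)`. The graphs are not isomorphic because
`C_{2n} ⊗ H` is bipartite through its first coordinate, while `C_{2n} □ C_{2m+1}` contains the
odd cycle `C_{2m+1}` as a fibre.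
-/

open Matrix Kronecker Real

namespace Matrix

variable {ι : Type*} [Fintype ι] [DecidableEq ι]

lemma map_mem_spectrum_map_iff {K L : Type*} [Field K] [Field L] (f : K →+* L)
    (M : Matrix ι ι K) (μ : K) : f μ ∈ spectrum L (M.map f) ↔ μ ∈ spectrum K M := by
  rw [mem_spectrum_iff_isRoot_charpoly, mem_spectrum_iff_isRoot_charpoly, charpoly_map,
    Polynomial.isRoot_map_iff f.injective]

lemma spectrum_eq_range_of_mul_eq_mul_diagonal {K : Type*} [Field K] {M P : Matrix ι ι K}
    {d : ι → K} (hP : IsUnit P) (h : M * P = P * diagonal d) : spectrum K M = Set.range d := by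
  obtain ⟨u, rfl⟩ := hP
  have : M = u * diagonal d * (u⁻¹ : (Matrix ι ι K)ˣ) := by
    rw [← h, mul_assoc, u.mul_inv, mul_one]
  rw [this, spectrum.units_conjugate, spectrum_diagonal]

lemma kroneckerSum_mul_kronecker {K κ : Type*} [CommRing K] [Fintype κ] [DecidableEq κ]
    {A P : Matrix ι ι K} {B Q : Matrix κ κ K} {d : ι → K} {e : κ → K}
    (hA : A * P = P * diagonal d) (hB : B * Q = Q * diagonal e) :
    (A ⊗ₖ 1 + 1 ⊗ₖ B) * (P ⊗ₖ Q) = (P ⊗ₖ Q) * diagonal fun p => d p.1 + e p.2 := by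
  have hdiag : diagonal (fun p : ι × κ => d p.1 + e p.2) =
      diagonal d ⊗ₖ 1 + 1 ⊗ₖ diagonal e := by
    rw [← diagonal_one, ← diagonal_one, diagonal_kronecker_diagonal, diagonal_kronecker_diagonal,
      diagonal_add]
    simp only [mul_one, one_mul]
  rw [hdiag, add_mul, mul_add, ← mul_kronecker_mul, ← mul_kronecker_mul, ← mul_kronecker_mul,
    ← mul_kronecker_mul, hA, hB, one_mul, mul_one, one_mul, mul_one]

end Matrix

lemma adjMat_cartProd_map {α β R : Type*} [Fintype α] [Fintype β] [DecidableEq α]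
    [DecidableEq β] [Ring R] (f : ℝ →+* R) (G : SimpleGraph α) (H : SimpleGraph β) :
    (adjMat (cartProd G H)).map f = (adjMat G).map f ⊗ₖ 1 + 1 ⊗ₖ (adjMat H).map f := by
  ext ⟨a, b⟩ ⟨a', b'⟩
  simp only [adjMat, map_apply, of_apply, Matrix.add_apply, kroneckerMap_apply, one_apply]
  split_ifs <;> simp_all [cartProd]

section Coloring

variable {α β : Type*} {G : SimpleGraph α} {H : SimpleGraph β} {k : ℕ}

lemma colorable_tensorProd_of_left (H : SimpleGraph β) (hG : G.Colorable k) :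
    (tensorProd G H).Colorable k :=
  hG.of_hom ⟨Prod.fst, fun h => h.1⟩

lemma colorable_of_colorable_cartProd (a : α) (h : (cartProd G H).Colorable k) :
    H.Colorable k :=
  h.of_hom ⟨fun b => (a, b), fun h => Or.inr ⟨rfl, h⟩⟩

lemma not_nonempty_cartProd_iso_tensorProd [Nonempty α] (hG : G.Colorable k)
    (hH : ¬ H.Colorable k) : ¬ Nonempty (cartProd G H ≃g tensorProd G H) := fun ⟨φ⟩ =>
  hH <| colorable_of_colorable_cartProd (Classical.arbitrary α)
    ((colorable_tensorProd_of_left H hG).of_hom φ.toHom)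

end Coloring

section Cycle

variable {N : ℕ}

lemma cycleG_adj_iff [Fact (1 < N)] {i j : ZMod N} :
    (cycleG N).Adj i j ↔ j = i + 1 ∨ j = i - 1 := by
  constructor
  · rintro ⟨-, h | h⟩
    · exact Or.inr (by linear_combination -h)
    · exact Or.inl (by linear_combination h)
  · rintro (rfl | rfl)
    · exact ⟨fun h => one_ne_zero (by linear_combination -h), Or.inr (by ring)⟩
    · exact ⟨fun h => one_ne_zero (by linear_combination h), Or.inl (by ring)⟩

lemma colorable_two_cycleG_of_even (hN : Even N) : (cycleG N).Colorable 2 := by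
  obtain ⟨n, rfl⟩ := hN
  let parity := ZMod.castHom (⟨n, (two_mul n).symm⟩ : 2 ∣ n + n) (ZMod 2)
  refine (Coloring.mk parity fun {i j} hij heq => ?_).colorable
  have hdiff : parity i - parity j = 1 ∨ parity j - parity i = 1 := by
    rcases hij.2 with h | h
    · exact Or.inl (by rw [← map_sub, h, map_one])
    · exact Or.inr (by rw [← map_sub, h, map_one])
  rw [heq, sub_self] at hdiff
  simp at hdiff

lemma not_colorable_two_cycleG_of_odd (hN : Odd N) (hN1 : 1 < N) : ¬ (cycleG N).Colorable 2 := by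
  have : Fact (1 < N) := ⟨hN1⟩
  rintro ⟨C⟩
  let c : ZMod N → ZMod 2 := C
  have hflip : ∀ a b : ZMod 2, a ≠ b → b = a + 1 := by decide
  have step (j : ZMod N) : c (j + 1) = c j + 1 :=
    hflip _ _ (C.valid (cycleG_adj_iff.mpr (Or.inl rfl)))
  have walk (j : ℕ) : c j = c 0 + j := by
    induction j with
    | zero => simp
    | succ j ih => rw [Nat.cast_succ, step, ih, Nat.cast_succ, add_assoc]
  have := walk N
  rw [ZMod.natCast_self, (ZMod.natCast_eq_one_iff_odd).mpr hN] at this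
  simp at this

lemma adjMat_cycleG_apply [NeZero N] (hN : 2 < N) (i j : ZMod N) :
    adjMat (cycleG N) i j = (if j = i + 1 then 1 else 0) + (if j = i - 1 then 1 else 0) := by
  have : Fact (1 < N) := ⟨by omega⟩
  have hne : i + 1 ≠ i - 1 := by
    intro h
    have h2 : ((2 : ℕ) : ZMod N) = 0 := by push_cast; linear_combination h
    rw [ZMod.natCast_eq_zero_iff] at h2
    exact absurd (Nat.le_of_dvd two_pos h2) (by omega)
  simp only [adjMat, of_apply, cycleG_adj_iff]
  by_cases h1 : j = i + 1 <;> by_cases h2 : j = i - 1 <;> simp_all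

noncomputable def cycleEigenvalue (N : ℕ) (k : ZMod N) : ℝ :=
  2 * cos (2 * π * k.val / N)

namespace ZMod

variable [NeZero N]

noncomputable def fourierMatrix (N : ℕ) [NeZero N] : Matrix (ZMod N) (ZMod N) ℂ :=
  of fun j k => stdAddChar (j * k)

lemma fourierMatrix_mul_of_neg :
    fourierMatrix N * of (fun j k => stdAddChar (-(j * k))) = (N : ℂ) • 1 := by
  ext j l
  have (k : ZMod N) :
      stdAddChar (j * k) * stdAddChar (-(k * l)) = stdAddChar (k * (j - l)) := by
    rw [← AddChar.map_add_eq_mul]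
    ring_nf
  simp only [mul_apply, fourierMatrix, of_apply, this,
    AddChar.sum_mulShift _ (isPrimitive_stdAddChar N), sub_eq_zero, Matrix.smul_apply,
    Matrix.one_apply, ZMod.card]
  split_ifs <;> simp

lemma isUnit_fourierMatrix : IsUnit (fourierMatrix N) := by
  have hN : (N : ℂ) ≠ 0 := Nat.cast_ne_zero.mpr (NeZero.ne N)
  refine (isUnit_iff_isUnit_det _).mpr
    (isUnit_det_of_right_inverse (B := (N : ℂ)⁻¹ • of fun j k => stdAddChar (-(j * k))) ?_)
  rw [Matrix.mul_smul, fourierMatrix_mul_of_neg, smul_smul, inv_mul_cancel₀ hN, one_smul]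

lemma stdAddChar_add_stdAddChar_neg (k : ZMod N) :
    stdAddChar k + stdAddChar (-k) = (cycleEigenvalue N k : ℂ) := by
  rw [AddChar.map_neg_eq_inv, stdAddChar_apply, toCircle_apply, ← Complex.exp_neg,
    cycleEigenvalue]
  push_cast
  rw [Complex.cos, mul_div_cancel₀ _ two_ne_zero]
  ring_nf

end ZMod

open ZMod in
lemma adjMat_cycleG_map_mul_fourierMatrix [NeZero N] (hN : 2 < N) :
    (adjMat (cycleG N)).map Complex.ofRealHom * fourierMatrix N =
      fourierMatrix N * diagonal fun k => (cycleEigenvalue N k : ℂ) := by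
  ext j k
  rw [mul_diagonal]
  simp only [mul_apply, map_apply, adjMat_cycleG_apply hN, fourierMatrix, of_apply,
    ← stdAddChar_add_stdAddChar_neg, Complex.ofRealHom_eq_coe, Complex.ofReal_add,
    apply_ite Complex.ofReal, Complex.ofReal_one, Complex.ofReal_zero, add_mul, ite_mul, one_mul,
    zero_mul, Finset.sum_add_distrib, Finset.sum_ite_eq', Finset.mem_univ, if_true]
  rw [mul_add, ← AddChar.map_add_eq_mul, ← AddChar.map_add_eq_mul]
  ring_nf

lemma spectrum_adjMat_cartProd_cycleG {M : ℕ} [NeZero N] [NeZero M] (hN : 2 < N) (hM : 2 < M) :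
    spectrum ℝ (adjMat (cartProd (cycleG N) (cycleG M))) =
      Set.range fun p : ZMod N × ZMod M => cycleEigenvalue N p.1 + cycleEigenvalue M p.2 := by
  ext μ
  rw [← map_mem_spectrum_map_iff Complex.ofRealHom, adjMat_cartProd_map,
    spectrum_eq_range_of_mul_eq_mul_diagonal
      (ZMod.isUnit_fourierMatrix.kronecker ZMod.isUnit_fourierMatrix)
      (kroneckerSum_mul_kronecker (adjMat_cycleG_map_mul_fourierMatrix hN)
        (adjMat_cycleG_map_mul_fourierMatrix hM))]
  simp only [Set.mem_range, Complex.ofRealHom_eq_coe]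
  norm_cast

end Cycle

lemma neg_two_le_cycleEigenvalue (N : ℕ) (k : ZMod N) : -2 ≤ cycleEigenvalue N k := by
  unfold cycleEigenvalue
  linarith [neg_one_le_cos (2 * π * k.val / N)]

lemma cycleEigenvalue_two_mul_self {n : ℕ} (hn : n ≠ 0) : cycleEigenvalue (2 * n) n = -2 := by
  unfold cycleEigenvalue
  rw [ZMod.val_cast_of_lt (by omega)]
  have : 2 * π * n / (2 * n : ℕ) = π := by
    push_cast
    field_simp
  rw [this, cos_pi]
  norm_num

lemma cycleEigenvalue_odd_natCast (m : ℕ) :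
    cycleEigenvalue (2 * m + 1) m = 2 * cos (2 * m * π / (2 * m + 1)) := by
  unfold cycleEigenvalue
  rw [ZMod.val_cast_of_lt (by omega)]
  push_cast
  ring_nf

lemma cos_two_pi_mul_div_odd_le_of_le {m v : ℕ} (hv : v ≤ m) :
    cos (2 * π * m / (2 * m + 1 : ℕ)) ≤ cos (2 * π * v / (2 * m + 1 : ℕ)) := by
  refine cos_le_cos_of_nonneg_of_le_pi (by positivity) ?_ (by gcongr)
  rw [div_le_iff₀ (by positivity)]
  push_cast
  nlinarith [pi_pos]

lemma cycleEigenvalue_odd_le (m : ℕ) (k : ZMod (2 * m + 1)) :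
    cycleEigenvalue (2 * m + 1) m ≤ cycleEigenvalue (2 * m + 1) k := by
  unfold cycleEigenvalue
  rw [ZMod.val_cast_of_lt (by omega)]
  gcongr 2 * ?_
  rcases le_or_gt k.val m with h | h
  · exact cos_two_pi_mul_div_odd_le_of_le h
  · have hk := k.val_lt
    have hN : ((2 * m + 1 : ℕ) : ℝ) ≠ 0 := by positivity
    have hsymm : 2 * π * k.val / (2 * m + 1 : ℕ) =
        2 * π - 2 * π * (2 * m + 1 - k.val : ℕ) / (2 * m + 1 : ℕ) := by
      rw [Nat.cast_sub hk.le]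
      field_simp
      ring
    rw [hsymm, cos_two_pi_sub]
    exact cos_two_pi_mul_div_odd_le_of_le (by omega)

lemma neg_two_lt_cycleEigenvalue_odd (m : ℕ) : -2 < cycleEigenvalue (2 * m + 1) m := by
  have hlt : 2 * m * π / (2 * m + 1) < π := by
    rw [div_lt_iff₀ (by positivity)]
    nlinarith [pi_pos]
  have := cos_lt_cos_of_nonneg_of_le_pi (by positivity) le_rfl hlt
  rw [cycleEigenvalue_odd_natCast]
  rw [cos_pi] at this
  linarith

theorem stmt_6 (n m : ℕ) (hn : 2 ≤ n) (hm : 1 ≤ m) :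
    letI : NeZero (2 * n) := ⟨by omega⟩
    ((-2 + 2 * Real.cos (2 * (m : ℝ) * Real.pi / (2 * (m : ℝ) + 1)) ∈
        spectrum ℝ (adjMat (cartProd (cycleG (2 * n)) (cycleG (2 * m + 1))))) ∧
      (∀ μ ∈ spectrum ℝ (adjMat (cartProd (cycleG (2 * n)) (cycleG (2 * m + 1)))),
        -2 + 2 * Real.cos (2 * (m : ℝ) * Real.pi / (2 * (m : ℝ) + 1)) ≤ μ) ∧
      -2 + 2 * Real.cos (2 * (m : ℝ) * Real.pi / (2 * (m : ℝ) + 1)) ∉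
        ({-4, 4 * Real.cos (2 * (m : ℝ) * Real.pi / (2 * (m : ℝ) + 1))} : Set ℝ)) ∧
    ¬ Nonempty (cartProd (cycleG (2 * n)) (cycleG (2 * m + 1)) ≃g
        tensorProd (cycleG (2 * n)) (cycleG (2 * m + 1))) := by
  have : NeZero (2 * n) := ⟨by omega⟩
  set c := cos (2 * (m : ℝ) * π / (2 * (m : ℝ) + 1))
  have hc : cycleEigenvalue (2 * m + 1) m = 2 * c := cycleEigenvalue_odd_natCast m
  have hspec := spectrum_adjMat_cartProd_cycleG (N := 2 * n) (M := 2 * m + 1) (by omega) (by omega)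
  have hc_gt : -2 < 2 * c := hc ▸ neg_two_lt_cycleEigenvalue_odd m
  refine ⟨⟨?_, ?_, ?_⟩, not_nonempty_cartProd_iso_tensorProd
    (colorable_two_cycleG_of_even (even_two_mul n))
    (not_colorable_two_cycleG_of_odd (odd_two_mul_add_one m) (by omega))⟩
  · rw [hspec, ← hc, ← cycleEigenvalue_two_mul_self (by omega : n ≠ 0)]
    exact ⟨(n, m), rfl⟩
  · rw [hspec]
    rintro _ ⟨⟨k, l⟩, rfl⟩
    linarith [neg_two_le_cycleEigenvalue (2 * n) k, cycleEigenvalue_odd_le m l]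
  · simp only [Set.mem_insert_iff, Set.mem_singleton_iff, not_or]
    constructor <;> intro h <;> linarith
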